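/- arXiv:2605.18354 — 3 statements merged into one kernel-verified Lean document; each statement's English description precedes it below -/
import Mathlib

section
/- Let α ∈ (0,1) and let S_1, …, S_m, S_{m+1} be exchangeable real-valued random variables. Set k_α = ⌈(m+1)(1−α)⌉ and define the split-conformal quantile q̂ = S_{(k_α)} if k_α ≤ m and q̂ = +∞ if k_α = m+1, where S_{(1)} ≤ ⋯ ≤ S_{(m)} are the order statistics of S_1, …, S_m. Then P(S_{m+1} ≤ q̂) ≥ 1 − α. -/
/-!
Write `r j = #{i | S i < S j}` for the strict rank of the `j`-th score among all `m + 1`.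
For `1 ≤ k ≤ m`, the event `S (m+1) ≤ q̂` says exactly that `r (m+1) < k`. Whatever the
values, the `k` smallest scores have strict rank below `k`, so at least `k` of the events
`r j < k` occur; by exchangeability they all have the same probability, whence
`(m + 1) P(r (m+1) < k) ≥ k ≥ (m + 1)(1 - α)`.
-/

open MeasureTheory

/-- The `k`-th order statistic (1-indexed) of the values `f 0, …, f (m-1)`:
the `k`-th smallest value.  Junk value `0` when the index is out of range. -/
noncomputable def orderStatN {m : ℕ} (f : Fin m → ℝ) (k : ℕ) : ℝ :=
  if h : k - 1 < m then f (Tuple.sort f ⟨k - 1, h⟩) else 0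

/-- The split-conformal quantile: the `k`-th order statistic if `k ≤ m`, and `+∞`
otherwise (in particular when `k = m + 1`). -/
noncomputable def conformalQuantile {m : ℕ} (f : Fin m → ℝ) (k : ℕ) : EReal :=
  if k ≤ m then ((orderStatN f k : ℝ) : EReal) else ⊤

/-- A finite family of real-valued random variables is exchangeable if its joint
distribution is invariant under every permutation of the indices. -/
def Exchangeable {Ω : Type*} [MeasurableSpace Ω] (P : Measure Ω) {n : ℕ}
    (S : Fin n → Ω → ℝ) : Prop :=
  ∀ σ : Equiv.Perm (Fin n),
    Measure.map (fun ω (i : Fin n) => S (σ i) ω) P =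
      Measure.map (fun ω (i : Fin n) => S i ω) P

open Finset
open scoped ENNReal

lemma Finset.card_filter_univ_comp_equiv {ι κ : Type*} [Fintype ι] [Fintype κ] (e : ι ≃ κ)
    (p : κ → Prop) [DecidablePred p] : #{i | p (e i)} = #{j | p j} := by
  simpa only [card_filter] using e.sum_comp fun j => if p j then 1 else 0

section Rank

variable {α : Type*} [LinearOrder α] {n : ℕ}

def strictRank (x : Fin n → α) (j : Fin n) : ℕ := #{i | x i < x j}

lemma strictRank_comp_perm (x : Fin n → α) (σ : Equiv.Perm (Fin n)) (j : Fin n) :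
    strictRank (fun i => x (σ i)) j = strictRank x (σ j) :=
  card_filter_univ_comp_equiv σ fun i => x i < x (σ j)

lemma Monotone.le_apply_iff_card_filter_lt {g : Fin n → α} (hg : Monotone g) (y : α)
    (t : Fin n) : y ≤ g t ↔ #{j | g j < y} ≤ t := by
  constructor
  · intro hy
    have hsub : ({j | g j < y} : Finset (Fin n)) ⊆ Iio t := fun j hj => by
      simp only [mem_filter, mem_univ, true_and] at hj
      exact mem_Iio.mpr (lt_of_not_ge fun htj => (hj.trans_le hy).not_ge (hg htj))
    simpa using card_le_card hsub
  · intro hcard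
    by_contra! hy
    have hsub : Iic t ⊆ ({j | g j < y} : Finset (Fin n)) := fun j hj => by
      simpa using (hg (mem_Iic.mp hj)).trans_lt hy
    have := card_le_card hsub
    simp only [Fin.card_Iic] at this
    omega

lemma le_apply_sort_iff (x : Fin n → α) (y : α) (t : Fin n) :
    y ≤ x (Tuple.sort x t) ↔ #{i | x i < y} ≤ t := by
  rw [← card_filter_univ_comp_equiv (Tuple.sort x) fun i => x i < y]
  exact (Tuple.monotone_sort x).le_apply_iff_card_filter_lt y t

lemma le_card_strictRank_lt (x : Fin n → α) {k : ℕ} (hk : k ≤ n) :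
    k ≤ #{j | strictRank x j < k} := by
  have hmaps : Set.MapsTo (Tuple.sort x ∘ Fin.castLE hk) (univ : Finset (Fin k))
      ({j | strictRank x j < k} : Finset (Fin n)) := fun t _ =>
    mem_filter.mpr ⟨mem_univ _, ((le_apply_sort_iff x _ _).mp le_rfl).trans_lt t.isLt⟩
  simpa using card_le_card_of_injOn _ hmaps
    ((Tuple.sort x).injective.comp (Fin.castLE_injective hk)).injOn

end Rank

lemma le_orderStatN_iff {m k : ℕ} (hk1 : 1 ≤ k) (hkm : k ≤ m) (f : Fin m → ℝ) (y : ℝ) :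
    y ≤ orderStatN f k ↔ #{i | f i < y} < k := by
  rw [orderStatN, dif_pos (by omega), le_apply_sort_iff, Fin.val_mk]
  omega

lemma le_orderStatN_castSucc_iff {m k : ℕ} (hk1 : 1 ≤ k) (hkm : k ≤ m) (x : Fin (m + 1) → ℝ) :
    x (Fin.last m) ≤ orderStatN (fun i : Fin m => x i.castSucc) k ↔
      strictRank x (Fin.last m) < k := by
  rw [le_orderStatN_iff hk1 hkm, strictRank, card_filter, card_filter, Fin.sum_univ_castSucc]
  simp

lemma measurableSet_strictRank_lt {n : ℕ} (j : Fin n) (k : ℕ) :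
    MeasurableSet {x : Fin n → ℝ | strictRank x j < k} := by
  have : Measurable fun x : Fin n → ℝ => strictRank x j := by
    simp_rw [strictRank, card_filter]
    exact Finset.measurable_sum _ fun i _ => Measurable.ite
      (measurableSet_lt (measurable_pi_apply i) (measurable_pi_apply j)) measurable_const
      measurable_const
  exact this measurableSet_Iio

lemma natCast_mul_measure_univ_le_sum {Ω ι : Type*} [MeasurableSpace Ω] [Fintype ι]
    (P : Measure Ω) {A : ι → Set Ω} [∀ ω, DecidablePred fun i => ω ∈ A i]
    (hA : ∀ i, MeasurableSet (A i)) {k : ℕ} (hk : ∀ ω, k ≤ #{i | ω ∈ A i}) :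
    k * P Set.univ ≤ ∑ i, P (A i) := by
  calc (k : ℝ≥0∞) * P Set.univ = ∫⁻ _, (k : ℝ≥0∞) ∂P := (lintegral_const _).symm
    _ ≤ ∫⁻ ω, ∑ i, (A i).indicator (fun _ => 1) ω ∂P := lintegral_mono fun ω => by
      simp only [Set.indicator_apply, ← natCast_card_filter]
      exact_mod_cast hk ω
    _ = ∑ i, P (A i) := by
      rw [lintegral_finsetSum _ fun i _ => measurable_const.indicator (hA i)]
      exact sum_congr rfl fun i _ => lintegral_indicator_one (hA i)

namespace Exchangeable

variable {Ω : Type*} [MeasurableSpace Ω] {P : Measure Ω} {n : ℕ} {S : Fin n → Ω → ℝ}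

lemma measure_preimage_comp_perm (hexch : Exchangeable P S) (hmeas : ∀ i, Measurable (S i))
    (σ : Equiv.Perm (Fin n)) {A : Set (Fin n → ℝ)} (hA : MeasurableSet A) :
    P ((fun ω i => S (σ i) ω) ⁻¹' A) = P ((fun ω i => S i ω) ⁻¹' A) := by
  rw [← Measure.map_apply (measurable_pi_lambda _ fun i => hmeas (σ i)) hA,
    ← Measure.map_apply (measurable_pi_lambda _ hmeas) hA, hexch σ]

lemma measure_strictRank_lt_eq (hexch : Exchangeable P S) (hmeas : ∀ i, Measurable (S i))
    (i j : Fin n) (k : ℕ) :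
    P {ω | strictRank (fun l => S l ω) i < k} = P {ω | strictRank (fun l => S l ω) j < k} := by
  have hswap : {ω | strictRank (fun l => S l ω) i < k} =
      (fun ω l => S (Equiv.swap i j l) ω) ⁻¹' {x | strictRank x j < k} := by
    ext ω
    simp [strictRank_comp_perm (fun l => S l ω)]
  rw [hswap, hexch.measure_preimage_comp_perm hmeas _ (measurableSet_strictRank_lt j k)]
  rfl

lemma natCast_le_mul_measure_strictRank_lt [IsProbabilityMeasure P] (hexch : Exchangeable P S)
    (hmeas : ∀ i, Measurable (S i)) (j : Fin n) {k : ℕ} (hk : k ≤ n) :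
    (k : ℝ≥0∞) ≤ n * P {ω | strictRank (fun l => S l ω) j < k} := by
  have hA : ∀ i, MeasurableSet {ω | strictRank (fun l => S l ω) i < k} := fun i =>
    measurableSet_strictRank_lt i k |>.preimage (measurable_pi_lambda _ hmeas)
  calc (k : ℝ≥0∞) = k * P Set.univ := by simp
    _ ≤ ∑ i, P {ω | strictRank (fun l => S l ω) i < k} :=
      natCast_mul_measure_univ_le_sum P hA fun ω => le_card_strictRank_lt _ hk
    _ = n * P {ω | strictRank (fun l => S l ω) j < k} := by
      simp [hexch.measure_strictRank_lt_eq hmeas _ j]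

end Exchangeable

lemma natCast_mul_ofReal_le_natCeil (n : ℕ) (x : ℝ) :
    (n : ℝ≥0∞) * ENNReal.ofReal x ≤ ⌈n * x⌉₊ := by
  rw [← ENNReal.ofReal_natCast n, ← ENNReal.ofReal_mul n.cast_nonneg, ← ENNReal.ofReal_natCast]
  exact ENNReal.ofReal_le_ofReal (Nat.le_ceil _)

/-- Split-conformal coverage: for exchangeable `S 1, …, S m, S (m+1)`,
`k_α = ⌈(m+1)(1-α)⌉` and `q̂ = S_{(k_α)}` if `k_α ≤ m`, `q̂ = +∞` if `k_α = m+1`,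
we have `P(S_{m+1} ≤ q̂) ≥ 1 - α`. -/
theorem stmt1 {Ω : Type*} [MeasurableSpace Ω] (P : Measure Ω) [IsProbabilityMeasure P]
    {m : ℕ} (S : Fin (m + 1) → Ω → ℝ) (hmeas : ∀ i, Measurable (S i))
    (hexch : Exchangeable P S) (α : ℝ) (hα : α ∈ Set.Ioo (0 : ℝ) 1)
    (k : ℕ) (hk : k = ⌈((m : ℝ) + 1) * (1 - α)⌉₊) :
    ENNReal.ofReal (1 - α) ≤
      P {ω | (S (Fin.last m) ω : EReal) ≤
          conformalQuantile (fun i : Fin m => S i.castSucc ω) k} := by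
  obtain ⟨hα0, hα1⟩ := hα
  by_cases hkm : k ≤ m
  swap
  · simp [conformalQuantile, hkm, hα0.le]
  have hk1 : 1 ≤ k := by
    rw [hk, Nat.one_le_ceil_iff]
    exact mul_pos (by positivity) (sub_pos.mpr hα1)
  have hevent : {ω | (S (Fin.last m) ω : EReal) ≤
      conformalQuantile (fun i : Fin m => S i.castSucc ω) k} =
      {ω | strictRank (fun l => S l ω) (Fin.last m) < k} := by
    ext ω
    simp only [Set.mem_ofPred_eq, conformalQuantile, if_pos hkm, EReal.coe_le_coe_iff]
    exact le_orderStatN_castSucc_iff hk1 hkm fun l => S l ω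
  have hceil : ((m + 1 : ℕ) : ℝ≥0∞) * ENNReal.ofReal (1 - α) ≤ k := by
    simpa [hk] using natCast_mul_ofReal_le_natCeil (m + 1) (1 - α)
  rw [hevent, ← ENNReal.mul_le_mul_iff_right (by simp) (ENNReal.natCast_ne_top (m + 1))]
  exact hceil.trans
    (hexch.natCast_le_mul_measure_strictRank_lt hmeas (Fin.last m) (by omega))
end

section
/- (Left-tail order-statistic deviation inclusion.) Let S_1, …, S_m be real numbers with order statistics S_{(1)} ≤ ⋯ ≤ S_{(m)}, let F̂_m(q) = (1/m)·#{i : S_i ≤ q} be their empirical distribution function, and let F be a function with values in [0,1]. Let p ∈ [0,1], k = ⌈(m+1)p⌉ with k ≤ m, and q̂ = S_{(k)}. Fix q* ∈ ℝ, t > 0 and c > 0 with F(q* − t) ≤ p − c·t. If q̂ < q* − t, then sup_q |F̂_m(q) − F(q)| ≥ c·t. -/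
/-- The empirical distribution function `F̂_m(q) = (1/m) · #{i : S i ≤ q}`. -/
noncomputable def empCDF {m : ℕ} (S : Fin m → ℝ) (q : ℝ) : ℝ :=
  (m : ℝ)⁻¹ * (Finset.univ.filter fun i => S i ≤ q).card

section EmpiricalCDF

variable {m : ℕ} (S : Fin m → ℝ)

lemma empCDF_nonneg (q : ℝ) : 0 ≤ empCDF S q := by
  unfold empCDF
  positivity

lemma empCDF_le_one (q : ℝ) : empCDF S q ≤ 1 := by
  unfold empCDF
  rcases m.eq_zero_or_pos with rfl | hm
  · simp
  rw [inv_mul_le_iff₀ (by exact_mod_cast hm), mul_one]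
  exact_mod_cast (Finset.card_filter_le _ _).trans_eq (Finset.card_fin m)

lemma empCDF_mono : Monotone (empCDF S) := fun _ _ hqq' => by
  unfold empCDF
  gcongr

lemma card_le_card_filter_le_orderStatN {k : ℕ} (hk1 : 1 ≤ k) (hkm : k ≤ m) :
    k ≤ (Finset.univ.filter fun i => S i ≤ orderStatN S k).card := by
  have hk : k - 1 < m := by omega
  have hsub : (Finset.Iic (⟨k - 1, hk⟩ : Fin m)).image (Tuple.sort S) ⊆
      Finset.univ.filter fun i => S i ≤ orderStatN S k := by
    simp only [Finset.subset_iff, Finset.mem_image, Finset.mem_Iic, Finset.mem_filter,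
      Finset.mem_univ, true_and, orderStatN, dif_pos hk]
    rintro _ ⟨j, hj, rfl⟩
    exact Tuple.monotone_sort S hj
  have := Finset.card_le_card hsub
  rwa [Finset.card_image_of_injective _ (Tuple.sort S).injective, Fin.card_Iic,
    Nat.sub_add_cancel hk1] at this

lemma div_le_empCDF_orderStatN {k : ℕ} (hk1 : 1 ≤ k) (hkm : k ≤ m) :
    (k : ℝ) / m ≤ empCDF S (orderStatN S k) := by
  rw [empCDF, div_eq_inv_mul]
  gcongr
  exact_mod_cast card_le_card_filter_le_orderStatN S hk1 hkm

end EmpiricalCDF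

lemma le_natCeil_succ_mul_div {m : ℕ} (hm : 0 < m) {p : ℝ} (hp : 0 ≤ p) :
    p ≤ (⌈((m : ℝ) + 1) * p⌉₊ : ℝ) / m := by
  rw [le_div_iff₀ (by exact_mod_cast hm)]
  calc p * m ≤ ((m : ℝ) + 1) * p := by nlinarith
    _ ≤ ⌈((m : ℝ) + 1) * p⌉₊ := Nat.le_ceil _

lemma bddAbove_range_abs_empCDF_sub {m : ℕ} (S : Fin m → ℝ) {F : ℝ → ℝ}
    (hF : ∀ q, F q ∈ Set.Icc (0 : ℝ) 1) :
    BddAbove (Set.range fun q => |empCDF S q - F q|) := by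
  refine ⟨1, ?_⟩
  rintro _ ⟨q, rfl⟩
  obtain ⟨hF0, hF1⟩ := hF q
  rw [abs_sub_le_iff]
  constructor <;> linarith [empCDF_nonneg S q, empCDF_le_one S q]

theorem stmt9_general {m : ℕ} (S : Fin m → ℝ)
    (F : ℝ → ℝ) (hF : ∀ q, F q ∈ Set.Icc (0 : ℝ) 1)
    (p : ℝ) (hp : p ∈ Set.Icc (0 : ℝ) 1)
    (k : ℕ) (hk : k = ⌈((m : ℝ) + 1) * p⌉₊) (hk1 : 1 ≤ k) (hkm : k ≤ m)
    (qstar t c : ℝ)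
    (hgrow : F (qstar - t) ≤ p - c * t)
    (hq : orderStatN S k < qstar - t) :
    c * t ≤ ⨆ q : ℝ, |empCDF S q - F q| := by
  have hp_le : p ≤ empCDF S (qstar - t) :=
    calc p ≤ (k : ℝ) / m := hk ▸ le_natCeil_succ_mul_div (by omega) hp.1
      _ ≤ empCDF S (orderStatN S k) := div_le_empCDF_orderStatN S hk1 hkm
      _ ≤ empCDF S (qstar - t) := empCDF_mono S hq.le
  refine le_ciSup_of_le (bddAbove_range_abs_empCDF_sub S hF) (qstar - t) ?_
  exact le_abs.mpr (Or.inl (by linarith))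

/-- Left-tail order-statistic deviation inclusion: with `k = ⌈(m+1)p⌉ ≤ m`,
`q̂ = S_{(k)}`, and `F(q* − t) ≤ p − c·t`, if `q̂ < q* − t` then
`sup_q |F̂_m(q) − F(q)| ≥ c·t`. -/
theorem stmt9 {m : ℕ} (S : Fin m → ℝ)
    (F : ℝ → ℝ) (hF : ∀ q, F q ∈ Set.Icc (0 : ℝ) 1)
    (p : ℝ) (hp : p ∈ Set.Icc (0 : ℝ) 1)
    (k : ℕ) (hk : k = ⌈((m : ℝ) + 1) * p⌉₊) (hk1 : 1 ≤ k) (hkm : k ≤ m)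
    (qstar t c : ℝ) (ht : 0 < t) (hc : 0 < c)
    (hgrow : F (qstar - t) ≤ p - c * t)
    (hq : orderStatN S k < qstar - t) :
    c * t ≤ ⨆ q : ℝ, |empCDF S q - F q| :=
  stmt9_general S F hF p hp k hk hk1 hkm qstar t c hgrow hq
end

section
/- (Uniform empirical-CDF event implies quantile deviation bound.) Let S_1, …, S_m be real numbers with empirical distribution function F̂_m(q) = (1/m)·#{i : S_i ≤ q}, and let F be a function with values in [0,1]. Let p ∈ [0,1], k = ⌈(m+1)p⌉ with k ≤ m, and q̂ = S_{(k)}. Fix q* ∈ ℝ, t > 0, c > 0 with F(q* + t) ≥ p + c·t and F(q* − t) ≤ p − c·t, and suppose sup_q |F̂_m(q) − F(q)| ≤ c·t − 2/m (in particular c·t > 2/m). Then |q̂ − q*| ≤ t. -/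
/-
The `k`-th order statistic is a Galois dual of the counting function:
`S_{(k)} ≤ q ↔ k ≤ #{i | S i ≤ q}`. Since `(m + 1) p ≤ k < (m + 1) p + 1`, it suffices that
`m F̂_m(q* + t) ≥ m p + 2` and `m F̂_m(q* − t) ≤ m p − 2`, and the uniform bound
`|F̂_m − F| ≤ c t − 2/m` turns the growth condition on `F` into exactly these two inequalities.
-/

open Finset

theorem Monotone.apply_le_iff_lt_card_filter_le {m : ℕ} {β : Type*} [LinearOrder β]
    {g : Fin m → β} (hg : Monotone g) (j : Fin m) (q : β) :
    g j ≤ q ↔ (j : ℕ) < #{i | g i ≤ q} := by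
  constructor
  · intro hj
    have hsub : Iic j ⊆ univ.filter (g · ≤ q) := fun i hi ↦
      mem_filter.mpr ⟨mem_univ i, (hg (mem_Iic.mp hi)).trans hj⟩
    simpa [Fin.card_Iic] using card_le_card hsub
  · intro hcard
    by_contra! hj
    have hsub : univ.filter (g · ≤ q) ⊆ Iio j := fun i hi ↦ by
      have hi : g i ≤ q := (mem_filter.mp hi).2
      exact mem_Iio.mpr (hg.reflect_lt (hi.trans_lt hj))
    simpa [Fin.card_Iio] using hcard.trans_le (card_le_card hsub)

theorem orderStatN_le_iff {m : ℕ} (S : Fin m → ℝ) {k : ℕ} (hk1 : 1 ≤ k) (hkm : k ≤ m) (q : ℝ) :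
    orderStatN S k ≤ q ↔ k ≤ #{i | S i ≤ q} := by
  have hk : k - 1 < m := by omega
  have hperm : #{i | S (Tuple.sort S i) ≤ q} = #{i | S i ≤ q} := card_equiv (Tuple.sort S) (by simp)
  rw [orderStatN, dif_pos hk]
  exact ((Tuple.monotone_sort S).apply_le_iff_lt_card_filter_le _ q).trans
    (by simp only [Function.comp_apply, hperm]; omega)

theorem natCast_mul_empCDF {m : ℕ} (hm : m ≠ 0) (S : Fin m → ℝ) (q : ℝ) :
    (m : ℝ) * empCDF S q = #{i | S i ≤ q} := by
  rw [empCDF, ← mul_assoc, mul_inv_cancel₀ (Nat.cast_ne_zero.mpr hm), one_mul]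

theorem stmt17_general {m : ℕ} (S : Fin m → ℝ)
    (F : ℝ → ℝ)
    (p : ℝ) (hp : p ∈ Set.Icc (0 : ℝ) 1)
    (k : ℕ) (hk : k = ⌈((m : ℝ) + 1) * p⌉₊) (hk1 : 1 ≤ k) (hkm : k ≤ m)
    (qstar t c : ℝ)
    (hgrow1 : p + c * t ≤ F (qstar + t)) (hgrow2 : F (qstar - t) ≤ p - c * t)
    (hsup : ∀ q : ℝ, |empCDF S q - F q| ≤ c * t - 2 / m) :
    |orderStatN S k - qstar| ≤ t := by
  have hm : m ≠ 0 := by omega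
  have hm2 : (m : ℝ) * (2 / m) = 2 := mul_div_cancel₀ 2 (Nat.cast_ne_zero.mpr hm)
  have hk_lt : (k : ℝ) < ((m : ℝ) + 1) * p + 1 :=
    hk ▸ Nat.ceil_lt_add_one (mul_nonneg (by positivity) hp.1)
  have hk_ge : ((m : ℝ) + 1) * p ≤ k := hk ▸ Nat.le_ceil _
  have hupper : orderStatN S k ≤ qstar + t := by
    have hemp : p + 2 / m ≤ empCDF S (qstar + t) := by linarith [(abs_le.mp (hsup (qstar + t))).1]
    rw [orderStatN_le_iff S hk1 hkm, ← Nat.cast_le (α := ℝ), ← natCast_mul_empCDF hm]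
    linarith [mul_le_mul_of_nonneg_left hemp (Nat.cast_nonneg m), hp.2]
  have hlower : qstar - t < orderStatN S k := by
    have hemp : empCDF S (qstar - t) ≤ p - 2 / m := by linarith [(abs_le.mp (hsup (qstar - t))).2]
    rw [← not_le, orderStatN_le_iff S hk1 hkm, ← Nat.cast_le (α := ℝ), ← natCast_mul_empCDF hm]
    linarith [mul_le_mul_of_nonneg_left hemp (Nat.cast_nonneg m), hp.1]
  exact abs_sub_le_iff.mpr ⟨by linarith, by linarith⟩

/-- Uniform empirical-CDF event implies quantile deviation bound: with `k = ⌈(m+1)p⌉ ≤ m`,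
`q̂ = S_{(k)}`, the two-sided growth condition `F(q* + t) ≥ p + c·t`,
`F(q* − t) ≤ p − c·t`, and `sup_q |F̂_m(q) − F(q)| ≤ c·t − 2/m`, we have `|q̂ − q*| ≤ t`. -/
theorem stmt17 {m : ℕ} (S : Fin m → ℝ)
    (F : ℝ → ℝ) (hF : ∀ q, F q ∈ Set.Icc (0 : ℝ) 1)
    (p : ℝ) (hp : p ∈ Set.Icc (0 : ℝ) 1)
    (k : ℕ) (hk : k = ⌈((m : ℝ) + 1) * p⌉₊) (hk1 : 1 ≤ k) (hkm : k ≤ m)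
    (qstar t c : ℝ) (ht : 0 < t) (hc : 0 < c)
    (hgrow1 : p + c * t ≤ F (qstar + t)) (hgrow2 : F (qstar - t) ≤ p - c * t)
    (hsup : ∀ q : ℝ, |empCDF S q - F q| ≤ c * t - 2 / m) :
    |orderStatN S k - qstar| ≤ t :=
  stmt17_general S F p hp k hk hk1 hkm qstar t c hgrow1 hgrow2 hsup
end
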